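/- Let X₁, …, Xₙ be finite types, let X = X₁ × ⋯ × Xₙ, let P_Π(X) ⊆ Δ_X be the set of product measures on X, and for each i let KB_i ⊆ Δ_{X_i} be a constraint and S_i ⊆ X_i a set. Then every measure μ' in the relative-entropy projection P_Π(X)|(⋂_{i=1}^n {μ ∈ Δ_X : μ_{X_i} ∈ KB_i}) satisfies μ'(S₁ × ⋯ × Sₙ) = ∏_{i=1}^n μ'_{X_i}(S_i). -/

import Mathlib

/-- A probability measure (probability mass function) on a finite type. -/
structure PM (X : Type) [Fintype X] where
  pm : X → ℝ
  nonneg : ∀ x, 0 ≤ pm x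
  total : ∑ x, pm x = 1

namespace PM

variable {X Y : Type} [Fintype X] [Fintype Y]

/-- The probability of a set `S`: `μ(S) = ∑_{x ∈ S} μ(x)`. -/
noncomputable def prob (μ : PM X) (S : Set X) : ℝ := ∑ x, S.indicator μ.pm x

lemma prob_nonneg (μ : PM X) (S : Set X) : 0 ≤ μ.prob S :=
  Finset.sum_nonneg fun x _ => Set.indicator_apply_nonneg fun _ => μ.nonneg x

/-- Marginal on the first component: `μ_X(A) = μ(A × Y)`. -/
noncomputable def margFst (μ : PM (X × Y)) : PM X where
  pm x := ∑ y, μ.pm (x, y)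
  nonneg x := Finset.sum_nonneg fun y _ => μ.nonneg (x, y)
  total := by rw [← μ.total, ← Fintype.sum_prod_type]

/-- Marginal on the second component: `μ_Y(B) = μ(X × B)`. -/
noncomputable def margSnd (μ : PM (X × Y)) : PM Y where
  pm y := ∑ x, μ.pm (x, y)
  nonneg y := Finset.sum_nonneg fun x _ => μ.nonneg (x, y)
  total := by rw [← μ.total, ← Fintype.sum_prod_type_right]

/-- Conditioning `μ|S`; the junk value `μ` is returned when `μ(S) = 0`. -/
noncomputable def cond (μ : PM X) (S : Set X) : PM X :=
  if h : 0 < μ.prob S then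
    { pm := fun x => S.indicator μ.pm x / μ.prob S
      nonneg := fun x =>
        div_nonneg (Set.indicator_apply_nonneg fun _ => μ.nonneg x) (le_of_lt h)
      total := by
        rw [← Finset.sum_div]
        exact div_self (ne_of_gt h) }
  else μ

end PM

open PM

/-- An `X`-inference procedure: a partial map on sets of probability measures. -/
structure InfProc (X : Type) [Fintype X] where
  dom : Set (Set (PM X))
  map : Set (PM X) → Set (PM X)
  map_subset : ∀ A ∈ dom, map A ⊆ A
  map_empty_iff : ∀ A ∈ dom, (map A = ∅ ↔ A = ∅)

/-- `KB ⊢_I θ`. -/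
def Infers {X : Type} [Fintype X] (I : InfProc X) (KB θ : Set (PM X)) : Prop :=
  I.map KB ⊆ θ

section Lift

variable {X Y : Type} [Fintype X] [Fintype Y]

/-- A constraint on `Δ_X` viewed as a constraint on `Δ_{X×Y}`: `KB↑`. -/
def liftKB (Y : Type) [Fintype Y] (KB : Set (PM X)) : Set (PM (X × Y)) :=
  {μ | margFst μ ∈ KB}

/-- `proj_X(B) = {μ_X : μ ∈ B}`. -/
def projFst (B : Set (PM (X × Y))) : Set (PM X) := margFst '' B

/-- `ψ ⊆ Δ_{X×Y}` is `X`-conservative over `KB ⊆ Δ_X`. -/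
def Conservative (KB : Set (PM X)) (ψ : Set (PM (X × Y))) : Prop :=
  projFst (liftKB Y KB ∩ ψ) = KB

end Lift

/-- Robustness of a finitary inference procedure. -/
def Robust (I : ∀ (X : Type) [Fintype X], InfProc X) : Prop :=
  ∀ (X Y : Type) [Fintype X] [Fintype Y], ∀ KB φ : Set (PM X),
    KB ∈ (I X).dom → ∀ ψ : Set (PM (X × Y)), Conservative KB ψ →
      (Infers (I X) KB φ ↔ Infers (I (X × Y)) (liftKB Y KB ∩ ψ) (liftKB Y φ))

/-- An inference procedure is essentially entailment. -/
def EssEntail {X : Type} [Fintype X] (I : InfProc X) : Prop :=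
  ∀ KB ∈ I.dom, ∀ (S : Set X) (α β : ℝ),
    Infers I KB {μ | α < μ.prob S ∧ μ.prob S < β} →
    KB ⊆ {μ | α ≤ μ.prob S ∧ μ.prob S ≤ β}

def DI1 (I : ∀ (X : Type) [Fintype X], InfProc X) : Prop :=
  ∀ (X : Type) [Fintype X], ∀ (S : Set X) (α β : ℝ), α ≤ β →
    {μ : PM X | α ≤ μ.prob S ∧ μ.prob S ≤ β} ∈ (I X).dom

def DI2 (I : ∀ (X : Type) [Fintype X], InfProc X) : Prop :=
  ∀ (X Y : Type) [Fintype X] [Fintype Y], ∀ KB : Set (PM X),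
    KB ∈ (I X).dom → liftKB Y KB ∈ (I (X × Y)).dom

def DI3 (I : ∀ (X : Type) [Fintype X], InfProc X) : Prop :=
  ∀ (X : Type) [Fintype X], ∀ KB₁ KB₂ : Set (PM X),
    KB₁ ∈ (I X).dom → KB₂ ∈ (I X).dom → KB₁ ∩ KB₂ ∈ (I X).dom

/-- An `X`-`Y` embedding: a homomorphism of set algebras. -/
structure Emb (X Y : Type) where
  f : Set X → Set Y
  map_union : ∀ S T, f (S ∪ T) = f S ∪ f T
  map_compl : ∀ S, f Sᶜ = (f S)ᶜ

/-- A faithful embedding. -/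
def Emb.Faithful {X Y : Type} (e : Emb X Y) : Prop :=
  ∀ S T : Set X, S ⊆ T ↔ e.f S ⊆ e.f T

section Embeddings

variable {X Y : Type} [Fintype X] [Fintype Y]

/-- `μ` and `ν` correspond under `f`. -/
def Corr (e : Emb X Y) (μ : PM X) (ν : PM Y) : Prop :=
  ∀ S : Set X, μ.prob S = ν.prob (e.f S)

/-- `f*(D)`, the union over `μ ∈ D` of the measures corresponding to `μ`. -/
def fstar (e : Emb X Y) (D : Set (PM X)) : Set (PM Y) :=
  {ν | ∃ μ ∈ D, Corr e μ ν}

/-- Sets of measures `D_X` and `D_Y` correspond under `f`. -/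
def SetCorr (e : Emb X Y) (DX : Set (PM X)) (DY : Set (PM Y)) : Prop :=
  (∀ ν ∈ DY, ∃ μ ∈ DX, Corr e μ ν) ∧ (∀ μ ∈ DX, ∃ ν ∈ DY, Corr e μ ν)

end Embeddings

/-- Representation independence of a finitary inference procedure. -/
def RepInd (I : ∀ (X : Type) [Fintype X], InfProc X) : Prop :=
  ∀ (X Y : Type) [Fintype X] [Fintype Y] (e : Emb X Y), e.Faithful →
    (∀ KB : Set (PM X), KB ∈ (I X).dom ↔ fstar e KB ∈ (I Y).dom) ∧
    (∀ KB : Set (PM X), KB ∈ (I X).dom → ∀ θ : Set (PM X),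
      (Infers (I X) KB θ ↔ Infers (I Y) (fstar e KB) (fstar e θ)))

def DI4 (I : ∀ (X : Type) [Fintype X], InfProc X) : Prop :=
  ∀ (X Y : Type) [Fintype X] [Fintype Y] (e : Emb X Y), e.Faithful →
    ∀ KB : Set (PM X), (KB ∈ (I X).dom ↔ fstar e KB ∈ (I Y).dom)

/-- `A ⇔ B` for sets of measures. -/
def iffSet {α : Type*} (A B : Set α) : Set α := (A ∩ B) ∪ (Aᶜ ∩ Bᶜ)

def DI5 (I : ∀ (X : Type) [Fintype X], InfProc X) : Prop :=
  ∀ (X Y : Type) [Fintype X] [Fintype Y] (KB : Set (PM (X × Y))) (e : Emb X Y),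
    e.Faithful → KB ∈ (I (X × Y)).dom → ∀ φ₁ : Set (PM X),
      KB ∩ iffSet (liftKB Y φ₁) {μ | margSnd μ ∈ fstar e φ₁} ∈ (I (X × Y)).dom

/-- Minimal default independence. -/
def MDI (I : ∀ (X : Type) [Fintype X], InfProc X) : Prop :=
  ∀ (X Y : Type) [Fintype X] [Fintype Y], ∀ KB : Set (PM X), ∀ (S : Set X) (T : Set Y),
    liftKB Y KB ∈ (I (X × Y)).dom →
    Infers (I (X × Y)) (liftKB Y KB)
      {μ | μ.prob (S ×ˢ T) = μ.prob (S ×ˢ (Set.univ : Set Y)) * μ.prob ((Set.univ : Set X) ×ˢ T)}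

/-- `KB` depends only on `S₁, …, S_k`. -/
def DependsOnly {X : Type} [Fintype X] {k : ℕ} (KB : Set (PM X)) (S : Fin k → Set X) : Prop :=
  ∀ μ μ' : PM X, (∀ i, μ.prob (S i) = μ'.prob (S i)) → (μ ∈ KB ↔ μ' ∈ KB)

/-- An atom over `S₁, …, S_k`. -/
def Atom {X : Type} {k : ℕ} (S : Fin k → Set X) (c : Fin k → Bool) : Set X :=
  ⋂ i, (if c i then S i else (S i)ᶜ)

section KL

variable {X : Type} [Fintype X]

/-- Absolute continuity of pmfs. -/
def AbsCont (μ' μ : PM X) : Prop := ∀ x, μ.pm x = 0 → μ'.pm x = 0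

/-- Relative entropy `D(μ'‖μ) ∈ [0,∞]` (it is `⊤` unless `μ' ≪ μ`). -/
noncomputable def KL (μ' μ : PM X) : EReal := by
  classical
  exact if AbsCont μ' μ then
    ((∑ x, μ'.pm x * Real.log (μ'.pm x / μ.pm x) : ℝ) : EReal)
  else ⊤

/-- The relative-entropy projection `μ|θ`. -/
def klProj (μ : PM X) (θ : Set (PM X)) : Set (PM X) :=
  {μ' | μ' ∈ θ ∧ KL μ' μ ≠ ⊤ ∧ ∀ μ'' ∈ θ, KL μ' μ ≤ KL μ'' μ}

/-- `D|θ = ⋃_{μ ∈ D} μ|θ`. -/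
def DProj (D : Set (PM X)) (θ : Set (PM X)) : Set (PM X) :=
  ⋃ μ ∈ D, klProj μ θ

end KL

section Products

variable {n : ℕ} {X : Fin n → Type} [∀ i, Fintype (X i)]

/-- The `i`-th marginal of a measure on a finite product. -/
noncomputable def margPi (μ : PM (∀ i, X i)) (i : Fin n) : PM (X i) where
  pm a := μ.prob {x | x i = a}
  nonneg a := PM.prob_nonneg _ _
  total := by
    classical
    unfold PM.prob
    rw [Finset.sum_comm]
    have h : ∀ x : (∀ i, X i),
        (∑ a, ({y : ∀ j, X j | y i = a}).indicator μ.pm x) = μ.pm x := by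
      intro x
      simp [Set.indicator_apply]
    simp only [h]
    exact μ.total

/-- `μ` is a product measure on `X₁ × ⋯ × Xₙ`. -/
def IsProdPM (μ : PM (∀ i, X i)) : Prop :=
  ∃ μi : ∀ i, PM (X i), ∀ U : ∀ i, Set (X i),
    μ.prob {x | ∀ i, x i ∈ U i} = ∏ i, (μi i).prob (U i)

end Products

/-- The set `P_Π(X)` of product measures. -/
def PPi {n : ℕ} (X : Fin n → Type) [∀ i, Fintype (X i)] : Set (PM (∀ i, X i)) :=
  {μ | IsProdPM μ}

/-- `e` is a product embedding. -/
def IsProdEmb {n : ℕ} {X Y : Fin n → Type} (e : Emb (∀ i, X i) (∀ i, Y i)) : Prop :=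
  ∃ ei : ∀ i, Emb (X i) (Y i), ∀ S : Set (∀ i, X i),
    e.f S = ⋃ x ∈ S, {y | ∀ i, y i ∈ (ei i).f {x i}}

/-!
Let `μ = ∏ qᵢ` be the product prior and `μ'` a relative-entropy projection of `μ` onto the
constraint set, and let `ν = ∏ μ'ᵢ` be the product of the marginals of `μ'`. The constraint only
sees marginals, so `ν` is admissible too. Since `log (ν / μ)` is a sum of functions of single
coordinates, its expectations under `μ'` and `ν` agree, which gives the Pythagorean identity
`D(μ'‖μ) = D(μ'‖ν) + D(ν‖μ)`. Minimality of `μ'` then forces `D(μ'‖ν) ≤ 0`, so `μ' = ν` by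
Gibbs' inequality, and `μ'` is a product measure.
-/

open Real InformationTheory

namespace PM

variable {X : Type} [Fintype X]

@[ext]
lemma ext {μ ν : PM X} (h : μ.pm = ν.pm) : μ = ν := by
  cases μ; cases ν; cases h; rfl

lemma prob_singleton (μ : PM X) (a : X) : μ.prob {a} = μ.pm a := by
  classical
  simp [prob, Set.indicator_apply]

lemma prob_univ (μ : PM X) : μ.prob Set.univ = 1 := by
  simp [prob, μ.total]

-- The real value of `KL μ' μ`; junk unless `AbsCont μ' μ`, since `log (p / 0) = 0`.
noncomputable def relEntropy (μ' μ : PM X) : ℝ := ∑ x, μ'.pm x * log (μ'.pm x / μ.pm x)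

lemma relEntropy_eq_sum_klFun {μ' μ : PM X} (h : AbsCont μ' μ) :
    relEntropy μ' μ = ∑ x, μ.pm x * klFun (μ'.pm x / μ.pm x) := by
  have hterm : ∀ x, μ'.pm x * log (μ'.pm x / μ.pm x)
      = μ.pm x * klFun (μ'.pm x / μ.pm x) + μ'.pm x - μ.pm x := by
    intro x
    rcases (μ.nonneg x).eq_or_lt with h0 | hpos
    · simp [h x h0.symm, ← h0]
    · rw [klFun_apply]
      field_simp
      ring
  rw [relEntropy, Finset.sum_congr rfl fun x _ => hterm x, Finset.sum_sub_distrib,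
    Finset.sum_add_distrib, μ'.total, μ.total]
  ring

lemma eq_of_relEntropy_nonpos {μ' μ : PM X} (h : AbsCont μ' μ) (hle : relEntropy μ' μ ≤ 0) :
    μ' = μ := by
  have hterm : ∀ x, 0 ≤ μ.pm x * klFun (μ'.pm x / μ.pm x) := fun x =>
    mul_nonneg (μ.nonneg x) (klFun_nonneg (div_nonneg (μ'.nonneg x) (μ.nonneg x)))
  rw [relEntropy_eq_sum_klFun h] at hle
  have hzero := (Finset.sum_eq_zero_iff_of_nonneg fun x _ => hterm x).1
    (le_antisymm hle (Finset.sum_nonneg fun x _ => hterm x))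
  ext x
  rcases (μ.nonneg x).eq_or_lt with h0 | hpos
  · rw [h x h0.symm, ← h0]
  · have hx := hzero x (Finset.mem_univ x)
    rw [mul_eq_zero, klFun_eq_zero_iff (div_nonneg (μ'.nonneg x) hpos.le)] at hx
    exact (div_eq_one_iff_eq hpos.ne').1 (hx.resolve_left hpos.ne')

section Pi

variable {ι : Type} [Fintype ι] [DecidableEq ι] {X : ι → Type} [∀ i, Fintype (X i)]

noncomputable def pi (μ : ∀ i, PM (X i)) : PM (∀ i, X i) where
  pm x := ∏ i, (μ i).pm (x i)
  nonneg x := Finset.prod_nonneg fun i _ => (μ i).nonneg (x i)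
  total := by simp [← Fintype.prod_sum, PM.total]

@[simp]
lemma pm_pi (μ : ∀ i, PM (X i)) (x : ∀ i, X i) : (pi μ).pm x = ∏ i, (μ i).pm (x i) := rfl

lemma prob_pi (μ : ∀ i, PM (X i)) (U : ∀ i, Set (X i)) :
    (pi μ).prob {x | ∀ i, x i ∈ U i} = ∏ i, (μ i).prob (U i) := by
  simp only [prob, Fintype.prod_sum]
  refine Finset.sum_congr rfl fun x _ => ?_
  by_cases hx : ∀ i, x i ∈ U i
  · rw [Set.indicator_of_mem (show x ∈ {x | ∀ i, x i ∈ U i} from hx)]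
    exact Finset.prod_congr rfl fun i _ => (Set.indicator_of_mem (hx i) _).symm
  · obtain ⟨i, hi⟩ := not_forall.1 hx
    rw [Set.indicator_of_notMem (show x ∉ {x | ∀ i, x i ∈ U i} from hx),
      Finset.prod_eq_zero (Finset.mem_univ i) (Set.indicator_of_notMem hi _)]

lemma log_pi_div_pi {m q : ∀ i, PM (X i)} (hmq : ∀ i, AbsCont (m i) (q i))
    {x : ∀ i, X i} (hx : (pi m).pm x ≠ 0) :
    log ((pi m).pm x / (pi q).pm x) = ∑ i, log ((m i).pm (x i) / (q i).pm (x i)) := by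
  have hm : ∀ i, (m i).pm (x i) ≠ 0 := fun i =>
    Finset.prod_ne_zero_iff.1 hx i (Finset.mem_univ i)
  rw [pm_pi, pm_pi, ← Finset.prod_div_distrib,
    log_prod fun i _ => div_ne_zero (hm i) fun h => hm i (hmq i _ h)]

end Pi

end PM

lemma KL_eq_relEntropy {X : Type} [Fintype X] {μ' μ : PM X} (h : AbsCont μ' μ) :
    KL μ' μ = relEntropy μ' μ := by
  simp [KL, h, relEntropy]

lemma AbsCont.of_KL_ne_top {X : Type} [Fintype X] {μ' μ : PM X} (h : KL μ' μ ≠ ⊤) :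
    AbsCont μ' μ := by
  by_contra hc
  exact h (by simp [KL, hc])

lemma AbsCont.pi {ι : Type} [Fintype ι] [DecidableEq ι] {X : ι → Type} [∀ i, Fintype (X i)]
    {μ ν : ∀ i, PM (X i)} (h : ∀ i, AbsCont (μ i) (ν i)) : AbsCont (PM.pi μ) (PM.pi ν) := by
  intro x hx
  obtain ⟨i, -, hi⟩ := Finset.prod_eq_zero_iff.1 (PM.pm_pi _ x ▸ hx)
  exact Finset.prod_eq_zero (Finset.mem_univ i) (h i _ hi)

lemma mul_log_div_eq_add {p r s : ℝ} (hr : p ≠ 0 → r ≠ 0) (hs : p ≠ 0 → s ≠ 0) :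
    p * log (p / s) = p * log (p / r) + p * log (r / s) := by
  by_cases hp : p = 0
  · simp [hp]
  · rw [← mul_add, ← log_mul (div_ne_zero hp (hr hp)) (div_ne_zero (hr hp) (hs hp)),
      div_mul_div_cancel₀ (hr hp)]

section Marginals

variable {n : ℕ} {X : Fin n → Type} [∀ i, Fintype (X i)]

lemma pm_le_margPi (μ : PM (∀ i, X i)) (x : ∀ i, X i) (i : Fin n) :
    μ.pm x ≤ (margPi μ i).pm (x i) := by
  have := Finset.single_le_sum (f := fun y => Set.indicator {y : ∀ j, X j | y i = x i} μ.pm y)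
    (fun y _ => Set.indicator_apply_nonneg fun _ => μ.nonneg y) (Finset.mem_univ x)
  rwa [Set.indicator_of_mem (show x ∈ {y : ∀ j, X j | y i = x i} from rfl)] at this

lemma AbsCont.margPi {μ' μ : PM (∀ i, X i)} (h : AbsCont μ' μ) (i : Fin n) :
    AbsCont (margPi μ' i) (margPi μ i) := by
  intro a ha
  have hμ := (Finset.sum_eq_zero_iff_of_nonneg fun x _ =>
    Set.indicator_apply_nonneg fun _ => μ.nonneg x).1 ha
  exact Finset.sum_eq_zero fun x hx => Set.indicator_apply_eq_zero.2 fun hxa =>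
    h x (Set.indicator_apply_eq_zero.1 (hμ x hx) hxa)

lemma absCont_pi_margPi (μ : PM (∀ i, X i)) : AbsCont μ (PM.pi (margPi μ)) := by
  intro x hx
  obtain ⟨i, -, hi⟩ := Finset.prod_eq_zero_iff.1 (PM.pm_pi _ x ▸ hx)
  exact le_antisymm (hi ▸ pm_le_margPi μ x i) (μ.nonneg x)

lemma margPi_pi (m : ∀ i, PM (X i)) (i : Fin n) : margPi (PM.pi m) i = m i := by
  ext a
  have hbox : {x : ∀ j, X j | x i = a}
      = {x | ∀ j, x j ∈ Function.update (fun j => (Set.univ : Set (X j))) i {a} j} := by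
    ext x
    simpa using (Set.ext_iff.1 (Set.univ_pi_update_univ i {a}) x).symm
  change (PM.pi m).prob _ = _
  rw [hbox, PM.prob_pi, Finset.prod_eq_single i (fun j _ hj => by
    rw [Function.update_of_ne hj, PM.prob_univ]) (by simp), Function.update_self, prob_singleton]

lemma sum_pm_mul_margPi (μ : PM (∀ i, X i)) (i : Fin n) (w : X i → ℝ) :
    ∑ x, μ.pm x * w (x i) = ∑ a, (margPi μ i).pm a * w a := by
  classical
  simp only [margPi, PM.prob, Set.indicator_apply, Finset.sum_mul]
  rw [Finset.sum_comm]
  refine Finset.sum_congr rfl fun x _ => ?_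
  simp [ite_mul]

lemma sum_pm_mul_sum_apply (μ : PM (∀ i, X i)) (w : ∀ i, X i → ℝ) :
    ∑ x, μ.pm x * ∑ i, w i (x i) = ∑ i, ∑ a, (margPi μ i).pm a * w i a := by
  simp only [Finset.mul_sum]
  rw [Finset.sum_comm]
  exact Finset.sum_congr rfl fun i _ => sum_pm_mul_margPi μ i (w i)

lemma sum_mul_log_pi_div_pi {ρ : PM (∀ i, X i)} {m q : ∀ i, PM (X i)}
    (hρ : AbsCont ρ (PM.pi m)) (hmq : ∀ i, AbsCont (m i) (q i)) :
    ∑ x, ρ.pm x * log ((PM.pi m).pm x / (PM.pi q).pm x)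
      = ∑ i, ∑ a, (margPi ρ i).pm a * log ((m i).pm a / (q i).pm a) := by
  rw [← sum_pm_mul_sum_apply]
  refine Finset.sum_congr rfl fun x _ => ?_
  by_cases hx : (PM.pi m).pm x = 0
  · simp [hρ x hx]
  · rw [log_pi_div_pi hmq hx]

theorem relEntropy_pi_eq_add {μ' : PM (∀ i, X i)} {q : ∀ i, PM (X i)} (h : AbsCont μ' (PM.pi q)) :
    relEntropy μ' (PM.pi q)
      = relEntropy μ' (PM.pi (margPi μ')) + relEntropy (PM.pi (margPi μ')) (PM.pi q) := by
  set ν := PM.pi (margPi μ')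
  have hμ'ν : AbsCont μ' ν := absCont_pi_margPi μ'
  have hmq : ∀ i, AbsCont (margPi μ' i) (q i) := fun i => margPi_pi q i ▸ h.margPi i
  have hcross : ∑ x, μ'.pm x * log (ν.pm x / (PM.pi q).pm x)
      = ∑ x, ν.pm x * log (ν.pm x / (PM.pi q).pm x) := by
    rw [sum_mul_log_pi_div_pi hμ'ν hmq, sum_mul_log_pi_div_pi (fun _ hx => hx) hmq]
    simp only [margPi_pi]
  rw [relEntropy, relEntropy, relEntropy, ← hcross, ← Finset.sum_add_distrib]
  exact Finset.sum_congr rfl fun x _ => mul_log_div_eq_add (fun hx h0 => hx (hμ'ν x h0))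
    (fun hx h0 => hx (h x h0))

lemma IsProdPM.exists_eq_pi {μ : PM (∀ i, X i)} (h : IsProdPM μ) : ∃ q, μ = PM.pi q := by
  obtain ⟨q, hq⟩ := h
  refine ⟨q, PM.ext (funext fun x => ?_)⟩
  have hx := hq fun i => {x i}
  simp only [Set.mem_singleton_iff, ← funext_iff, Set.ofPred_eq_eq_singleton, prob_singleton] at hx
  rw [hx, PM.pm_pi]

theorem eq_pi_margPi_of_mem_klProj {θ : Set (PM (∀ i, X i))} {μ μ' : PM (∀ i, X i)}
    (hμ : μ ∈ PPi X) (hθ : ∀ ρ ∈ θ, PM.pi (margPi ρ) ∈ θ) (h : μ' ∈ klProj μ θ) :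
    μ' = PM.pi (margPi μ') := by
  obtain ⟨q, rfl⟩ := IsProdPM.exists_eq_pi hμ
  obtain ⟨hμ'θ, hfin, hmin⟩ := h
  have hμ' : AbsCont μ' (PM.pi q) := AbsCont.of_KL_ne_top hfin
  have hν : AbsCont (PM.pi (margPi μ')) (PM.pi q) :=
    AbsCont.pi fun i => margPi_pi q i ▸ hμ'.margPi i
  have hle := hmin _ (hθ μ' hμ'θ)
  rw [KL_eq_relEntropy hμ', KL_eq_relEntropy hν, EReal.coe_le_coe_iff,
    relEntropy_pi_eq_add hμ'] at hle
  exact eq_of_relEntropy_nonpos (absCont_pi_margPi μ') (by linarith)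

end Marginals

/-- any measure in the relative-entropy projection of the
product priors onto a conjunction of componentwise constraints makes the
components independent. -/
theorem stmt18 {n : ℕ} (X : Fin n → Type) [∀ i, Fintype (X i)]
    (KB : ∀ i, Set (PM (X i))) (S : ∀ i, Set (X i)) (μ' : PM (∀ i, X i))
    (h : μ' ∈ DProj (PPi X) (⋂ i, {μ : PM (∀ i, X i) | margPi μ i ∈ KB i})) :
    μ'.prob {x | ∀ i, x i ∈ S i} = ∏ i, (margPi μ' i).prob (S i) := by
  obtain ⟨μ, hμ, hproj⟩ := Set.mem_iUnion₂.1 h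
  have hθ : ∀ ρ ∈ ⋂ i, {μ : PM (∀ i, X i) | margPi μ i ∈ KB i},
      PM.pi (margPi ρ) ∈ ⋂ i, {μ : PM (∀ i, X i) | margPi μ i ∈ KB i} := by
    intro ρ hρ
    simpa only [Set.mem_iInter, Set.mem_ofPred_eq, margPi_pi] using hρ
  calc μ'.prob {x | ∀ i, x i ∈ S i}
      = (PM.pi (margPi μ')).prob {x | ∀ i, x i ∈ S i} :=
        congrArg (PM.prob · _) (eq_pi_margPi_of_mem_klProj hμ hθ hproj)
    _ = ∏ i, (margPi μ' i).prob (S i) := PM.prob_pi _ _
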